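/- For a tree T of order n ≥ 2, the following are equivalent: (i) T is well-covered; (ii) T is very well-covered; (iii) T has a perfect matching consisting of pendant edges; (iv) T is square-stable. -/

import Mathlib

open SimpleGraph

attribute [local instance] Classical.propDecidable

variable {V : Type*}

/-- A stable (independent) set: pairwise non-adjacent vertices. -/
def IsStable (G : SimpleGraph V) (S : Finset V) : Prop :=
  ∀ ⦃a⦄, a ∈ S → ∀ ⦃b⦄, b ∈ S → ¬ G.Adj a b

/-- The stability (independence) number α(G). -/
noncomputable def alpha [Fintype V] (G : SimpleGraph V) : ℕ :=
  (Finset.univ.powerset.filter (fun S => IsStable G S)).sup Finset.card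

/-- A maximum stable set, i.e. a member of Ω(G). -/
def IsMaxStable [Fintype V] (G : SimpleGraph V) (S : Finset V) : Prop :=
  IsStable G S ∧ S.card = alpha G

/-- The square G² of a graph: distinct vertices adjacent iff at distance ≤ 2. -/
def square (G : SimpleGraph V) : SimpleGraph V where
  Adj u v := u ≠ v ∧ (G.Adj u v ∨ ∃ w, G.Adj u w ∧ G.Adj w v)
  symm := by
    constructor
    rintro u v ⟨h, h2⟩
    refine ⟨h.symm, ?_⟩
    rcases h2 with h2 | ⟨w, hw1, hw2⟩
    · exact Or.inl h2.symm
    · exact Or.inr ⟨w, hw2.symm, hw1.symm⟩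
  loopless := by constructor; rintro u ⟨h, _⟩; exact h rfl

/-- G is α-square-stable if α(G) = α(G²). -/
def SquareStable [Fintype V] (G : SimpleGraph V) : Prop :=
  alpha G = alpha (square G)

/-- The maximum matching size μ(G). -/
noncomputable def mu [Fintype V] (G : SimpleGraph V) : ℕ :=
  sSup {n | ∃ M : G.Subgraph, M.IsMatching ∧ M.verts.ncard = 2 * n}

/-- f realizes a matching of A into S: it sends each a ∈ A to a distinct
neighbour in S (so the corresponding edges form a matching ⊆ (A,S) saturating A). -/
def MatchedInto (G : SimpleGraph V) (A S : Finset V) (f : V → V) : Prop :=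
  (∀ a ∈ A, f a ∈ S ∧ G.Adj a (f a)) ∧ ∀ a ∈ A, ∀ b ∈ A, f a = f b → a = b

/-- Well-covered: no isolated vertices, and every maximal stable set is maximum. -/
def WellCovered [Fintype V] (G : SimpleGraph V) : Prop :=
  (∀ v : V, ∃ w, G.Adj v w) ∧
    ∀ S : Finset V, IsStable G S → (∀ T : Finset V, IsStable G T → S ⊆ T → S = T) →
      S.card = alpha G

/-- Very well-covered: well-covered and |V(G)| = 2α(G). -/
def VeryWellCovered [Fintype V] (G : SimpleGraph V) : Prop :=
  WellCovered G ∧ Fintype.card V = 2 * alpha G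

/-- The set of pendant (degree-one) vertices of G. -/
noncomputable def pendants [Fintype V] (G : SimpleGraph V) : Finset V :=
  Finset.univ.filter (fun v => G.degree v = 1)

/-- G has a perfect matching consisting of pendant edges. -/
def HasPendantPerfectMatching [Fintype V] (G : SimpleGraph V) : Prop :=
  ∃ M : G.Subgraph, M.IsPerfectMatching ∧
    ∀ a b : V, M.Adj a b → G.degree a = 1 ∨ G.degree b = 1

/-- The star K_{1,n}: vertex 0 is the center, adjacent to n leaves. -/
def starGraph (n : ℕ) : SimpleGraph (Fin (n + 1)) where
  Adj u v := u ≠ v ∧ (u = 0 ∨ v = 0)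
  symm := by constructor; rintro u v ⟨h1, h2⟩; exact ⟨h1.symm, h2.symm⟩
  loopless := by constructor; rintro u ⟨h, _⟩; exact h rfl

/-!
A tree is bipartite, and without isolated vertices each colour class is a maximal stable set.
So in a well-covered tree both classes are maximum, `|V| = 2α`, and Hall's condition holds
(a set `A` inside one class, together with the vertices of the other class outside `N(A)`, is
stable), which gives a perfect matching. If an edge `vw` of it had both ends of degree at
least two, neighbours `c` of `v` and `d` of `w` would be non-adjacent (no 4-cycles), and a
maximal stable set through `c, d` would miss both `v` and `w`, hence have fewer than `|V| / 2`
vertices. Conversely, when pendant edges form a perfect matching, every maximal stable set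
contains exactly one end of each of them, and the leaves are pairwise at distance at least
three. Finally, a stable set of `T²` with `α(T) ≥ |V| / 2` vertices has disjoint closed
neighbourhoods of at least two vertices each, so these are exactly the pendant edges of a
perfect matching.
-/

open Finset

section Stable

variable {G : SimpleGraph V} {S T : Finset V}

theorem IsStable.mono (hT : IsStable G T) (h : S ⊆ T) : IsStable G S :=
  fun _ ha _ hb => hT (h ha) (h hb)

theorem IsStable.insert_of_not_adj (hS : IsStable G S) {v : V} (hv : ∀ u ∈ S, ¬ G.Adj v u) :
    IsStable G (insert v S) := by
  intro a ha b hb hab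
  rcases mem_insert.1 ha with rfl | haS <;> rcases mem_insert.1 hb with rfl | hbS
  · exact hab.ne rfl
  · exact hv b hbS hab
  · exact hv a haS hab.symm
  · exact hS haS hbS hab

theorem isStable_pair {c d : V} (h : ¬ G.Adj c d) : IsStable G {c, d} := by
  simp only [IsStable, mem_insert, mem_singleton]
  rintro a (rfl | rfl) b (rfl | rfl) hab
  exacts [hab.ne rfl, h hab, h hab.symm, hab.ne rfl]

theorem isStable_singleton (v : V) : IsStable G {v} := by
  simp only [IsStable, mem_singleton]
  rintro a rfl b rfl
  exact G.irrefl

def IsMaximalStable (G : SimpleGraph V) (S : Finset V) : Prop :=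
  IsStable G S ∧ ∀ v ∉ S, ∃ u ∈ S, G.Adj v u

theorem isMaximalStable_iff :
    IsMaximalStable G S ↔ IsStable G S ∧ ∀ T, IsStable G T → S ⊆ T → S = T := by
  refine ⟨fun ⟨hS, hdom⟩ => ⟨hS, fun T hT hST => ?_⟩,
    fun ⟨hS, hmax⟩ => ⟨hS, fun v hv => ?_⟩⟩
  · by_contra hne
    obtain ⟨v, hvT, hvS⟩ := exists_of_ssubset (hST.ssubset_of_ne hne)
    obtain ⟨u, huS, hvu⟩ := hdom v hvS
    exact hT hvT (hST huS) hvu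
  · by_contra! hv'
    exact hv (hmax _ (hS.insert_of_not_adj hv') (subset_insert v S) ▸ mem_insert_self v S)

variable [Fintype V]

theorem IsStable.card_le_alpha (hS : IsStable G S) : #S ≤ alpha G :=
  le_sup (f := card) (by simpa using hS)

theorem exists_isStable_card_eq_alpha (G : SimpleGraph V) :
    ∃ S, IsStable G S ∧ #S = alpha G := by
  obtain ⟨S, hS, h⟩ := exists_mem_eq_sup (univ.powerset.filter (IsStable G ·))
    ⟨∅, by simp [IsStable]⟩ card
  exact ⟨S, (mem_filter.1 hS).2, h.symm⟩

theorem IsStable.exists_isMaximalStable_superset (hS : IsStable G S) :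
    ∃ T, S ⊆ T ∧ IsMaximalStable G T := by
  obtain ⟨T, hT, hmax⟩ := exists_max_image
    (univ.powerset.filter (fun T => S ⊆ T ∧ IsStable G T)) card ⟨S, by simp [hS]⟩
  simp only [mem_filter, mem_powerset, subset_univ, true_and] at hT hmax
  refine ⟨T, hT.1, hT.2, fun v hv => ?_⟩
  by_contra! hv'
  have := hmax _ ⟨hT.1.trans (subset_insert v T), hT.2.insert_of_not_adj hv'⟩
  rw [card_insert_of_notMem hv] at this
  omega

theorem exists_isMaximalStable_card_eq_alpha (G : SimpleGraph V) :
    ∃ S, IsMaximalStable G S ∧ #S = alpha G := by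
  obtain ⟨S, hS, hcard⟩ := exists_isStable_card_eq_alpha G
  refine ⟨S, isMaximalStable_iff.2 ⟨hS, fun T hT hST => ?_⟩, hcard⟩
  exact eq_of_subset_of_card_le hST (hcard ▸ hT.card_le_alpha)

theorem WellCovered.card_eq (hwc : WellCovered G) (hS : IsMaximalStable G S) :
    #S = alpha G :=
  hwc.2 S hS.1 (isMaximalStable_iff.1 hS).2

end Stable

section Pairing

variable {G : SimpleGraph V} {p : V → V}

/-- A perfect matching of `G`, encoded by the map sending each vertex to its partner. -/
def IsPairing (G : SimpleGraph V) (p : V → V) : Prop :=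
  Function.Involutive p ∧ ∀ v, G.Adj v (p v)

theorem SimpleGraph.Subgraph.IsPerfectMatching.exists_isPairing {M : G.Subgraph}
    (hM : M.IsPerfectMatching) : ∃ p, IsPairing G p ∧ ∀ v, M.Adj v (p v) := by
  choose p hp hpu using isPerfectMatching_iff.1 hM
  exact ⟨p, ⟨fun v => (hpu _ v (hp v).symm).symm, fun v => M.adj_sub (hp v)⟩, hp⟩

theorem IsPairing.two_mul_card_eq (hp : IsPairing G p) {S : Finset V} (hS : IsStable G S) :
    2 * #S = #(S ∪ S.image p) := by
  have hdisj : Disjoint S (S.image p) := by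
    refine disjoint_left.2 fun v hv hv' => ?_
    obtain ⟨u, hu, rfl⟩ := mem_image.1 hv'
    exact hS hu hv (hp.2 u)
  rw [card_union_of_disjoint hdisj, card_image_of_injective _ hp.1.injective, two_mul]

variable [Fintype V]

theorem IsPairing.two_mul_alpha_le (hp : IsPairing G p) : 2 * alpha G ≤ Fintype.card V := by
  obtain ⟨S, hS, hcard⟩ := exists_isStable_card_eq_alpha G
  rw [← hcard, hp.two_mul_card_eq hS]
  exact card_le_univ _

def PendantAdj (G : SimpleGraph V) (v w : V) : Prop :=
  G.Adj v w ∧ (G.degree v = 1 ∨ G.degree w = 1)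

theorem SimpleGraph.eq_of_adj_of_degree_eq_one {v u w : V} (hv : G.degree v = 1)
    (hu : G.Adj v u) (hw : G.Adj v w) : u = w :=
  (degree_eq_one_iff_existsUnique_adj.1 hv).unique hu hw

theorem IsPairing.pendantAdj_iff (hp : IsPairing G p)
    (hpend : ∀ v, G.degree v = 1 ∨ G.degree (p v) = 1) {v w : V} :
    PendantAdj G v w ↔ w = p v := by
  refine ⟨fun ⟨hvw, hdeg⟩ => ?_, ?_⟩
  · rcases hdeg with hv | hw
    · exact eq_of_adj_of_degree_eq_one hv hvw (hp.2 v)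
    · rw [eq_of_adj_of_degree_eq_one hw hvw.symm (hp.2 w), hp.1 w]
  · rintro rfl
    exact ⟨hp.2 v, hpend v⟩

theorem hasPendantPerfectMatching_of_existsUnique (h : ∀ v, ∃! w, PendantAdj G v w) :
    HasPendantPerfectMatching G := by
  let M : G.Subgraph :=
    { verts := Set.univ
      Adj := PendantAdj G
      adj_sub := And.left
      edge_vert := fun _ => Set.mem_univ _
      symm := ⟨fun _ _ ⟨hvw, hdeg⟩ => ⟨hvw.symm, hdeg.symm⟩⟩ }
  exact ⟨M, Subgraph.isPerfectMatching_iff.2 h, fun _ _ hab => hab.2⟩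

theorem IsPairing.hasPendantPerfectMatching (hp : IsPairing G p)
    (hpend : ∀ v, G.degree v = 1 ∨ G.degree (p v) = 1) : HasPendantPerfectMatching G :=
  hasPendantPerfectMatching_of_existsUnique fun v =>
    ⟨p v, (hp.pendantAdj_iff hpend).2 rfl, fun _ => (hp.pendantAdj_iff hpend).1⟩

theorem HasPendantPerfectMatching.exists_isPairing (h : HasPendantPerfectMatching G) :
    ∃ p, IsPairing G p ∧ ∀ v, G.degree v = 1 ∨ G.degree (p v) = 1 := by
  obtain ⟨M, hM, hpend⟩ := h
  obtain ⟨p, hp, hMp⟩ := hM.exists_isPairing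
  exact ⟨p, hp, fun v => hpend v (p v) (hMp v)⟩

end Pairing

section PendantMatching

variable [Fintype V] {G : SimpleGraph V} {p : V → V}

theorem IsPairing.two_mul_card_eq_of_isMaximalStable (hp : IsPairing G p)
    (hpend : ∀ v, G.degree v = 1 ∨ G.degree (p v) = 1) {S : Finset V}
    (hS : IsMaximalStable G S) : 2 * #S = Fintype.card V := by
  suffices hcover : S ∪ S.image p = univ by
    rw [hp.two_mul_card_eq hS.1, hcover, card_univ]
  refine eq_univ_of_forall fun v => ?_
  by_contra hv
  simp only [mem_union, mem_image, not_or, not_exists, not_and] at hv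
  have hpv : p v ∉ S := fun h => hv.2 _ h (hp.1 v)
  -- a leaf outside `S` is dominated by its only neighbour, which is its partner
  rcases hpend v with hdeg | hdeg
  · obtain ⟨u, hu, hvu⟩ := hS.2 v hv.1
    exact hpv (eq_of_adj_of_degree_eq_one hdeg hvu (hp.2 v) ▸ hu)
  · obtain ⟨u, hu, hpvu⟩ := hS.2 (p v) hpv
    have := eq_of_adj_of_degree_eq_one hdeg hpvu (hp.2 (p v))
    rw [hp.1 v] at this
    exact hv.1 (this ▸ hu)

theorem HasPendantPerfectMatching.card_eq_two_mul_alpha (h : HasPendantPerfectMatching G) :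
    Fintype.card V = 2 * alpha G := by
  obtain ⟨p, hp, hpend⟩ := h.exists_isPairing
  obtain ⟨S, hS, hcard⟩ := exists_isMaximalStable_card_eq_alpha G
  rw [← hcard, hp.two_mul_card_eq_of_isMaximalStable hpend hS]

theorem HasPendantPerfectMatching.wellCovered (h : HasPendantPerfectMatching G) :
    WellCovered G := by
  obtain ⟨p, hp, hpend⟩ := h.exists_isPairing
  refine ⟨fun v => ⟨p v, hp.2 v⟩, fun S hS hmax => ?_⟩
  have := hp.two_mul_card_eq_of_isMaximalStable hpend (isMaximalStable_iff.2 ⟨hS, hmax⟩)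
  have := h.card_eq_two_mul_alpha
  omega

theorem HasPendantPerfectMatching.veryWellCovered (h : HasPendantPerfectMatching G) :
    VeryWellCovered G :=
  ⟨h.wellCovered, h.card_eq_two_mul_alpha⟩

end PendantMatching

section Bipartite

variable {G : SimpleGraph V} {s t : Finset V}

theorem SimpleGraph.IsBipartite.exists_isBipartiteWith_finset [Fintype V] (hG : G.IsBipartite) :
    ∃ s t : Finset V, G.IsBipartiteWith ↑s ↑t := by
  obtain ⟨s, t, h⟩ := hG.exists_isBipartiteWith
  exact ⟨s.toFinset, t.toFinset, by simpa using h⟩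

namespace SimpleGraph.IsBipartiteWith

variable (h : G.IsBipartiteWith ↑s ↑t)
include h

theorem isStable_left : IsStable G s := fun _ ha _ hb hab =>
  Set.disjoint_left.1 h.disjoint (mem_coe.2 hb) (h.mem_of_mem_adj (mem_coe.2 ha) hab)

theorem biUnion_neighborFinset_subset [Fintype V] {A : Finset V} (hA : A ⊆ s) :
    A.biUnion (G.neighborFinset ·) ⊆ t := by
  intro v hv
  obtain ⟨a, ha, hav⟩ := mem_biUnion.1 hv
  exact mem_coe.1 (h.mem_of_mem_adj (mem_coe.2 (hA ha)) ((mem_neighborFinset _ _ _).1 hav))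

variable (hiso : ∀ v, ∃ w, G.Adj v w)
include hiso

theorem mem_right_of_notMem_left {v : V} (hv : v ∉ s) : v ∈ t := by
  obtain ⟨w, hvw⟩ := hiso v
  rcases h.mem_of_adj hvw with ⟨hvs, -⟩ | ⟨hvt, -⟩
  exacts [absurd hvs hv, hvt]

theorem isMaximalStable_left : IsMaximalStable G s := by
  refine ⟨h.isStable_left, fun v hv => ?_⟩
  obtain ⟨w, hvw⟩ := hiso v
  rcases h.mem_of_adj hvw with ⟨hvs, -⟩ | ⟨-, hws⟩
  exacts [absurd hvs hv, ⟨w, hws, hvw⟩]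

variable [Fintype V]

theorem card_add_card : #s + #t = Fintype.card V := by
  rw [← card_union_of_disjoint (disjoint_coe.1 h.disjoint), ← card_univ]
  congr 1
  exact eq_univ_of_forall fun v => by
    by_cases hv : v ∈ s
    exacts [mem_union_left _ hv, mem_union_right _ (h.mem_right_of_notMem_left hiso hv)]

theorem card_le_two_mul_alpha : Fintype.card V ≤ 2 * alpha G := by
  have := h.isStable_left.card_le_alpha
  have := h.symm.isStable_left.card_le_alpha
  have := h.card_add_card hiso
  omega

end SimpleGraph.IsBipartiteWith

variable [Fintype V]

theorem WellCovered.card_eq_two_mul_alpha (hwc : WellCovered G) (hG : G.IsBipartite) :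
    Fintype.card V = 2 * alpha G := by
  obtain ⟨s, t, h⟩ := hG.exists_isBipartiteWith_finset
  have := hwc.card_eq (h.isMaximalStable_left hwc.1)
  have := hwc.card_eq (h.symm.isMaximalStable_left hwc.1)
  have := h.card_add_card hwc.1
  omega

theorem IsStable.card_le_card_biUnion_neighborFinset {A Y : Finset V} (hA : IsStable G A)
    (hY : IsStable G Y) (hAY : Disjoint A Y) (hα : alpha G ≤ #Y) :
    #A ≤ #(A.biUnion (G.neighborFinset ·)) := by
  set N := A.biUnion (G.neighborFinset ·)
  -- `A` together with the part of `Y` it does not see is stable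
  have hstable : IsStable G (A ∪ (Y \ N)) := by
    have hAN : ∀ a ∈ A, ∀ b ∈ Y \ N, ¬ G.Adj a b := fun a ha b hb hab =>
      (mem_sdiff.1 hb).2 (mem_biUnion.2 ⟨a, ha, (mem_neighborFinset _ _ _).2 hab⟩)
    intro a ha b hb hab
    rcases mem_union.1 ha with ha | ha <;> rcases mem_union.1 hb with hb | hb
    exacts [hA ha hb hab, hAN a ha b hb hab, hAN b hb a ha hab.symm,
      hY (mem_sdiff.1 ha).1 (mem_sdiff.1 hb).1 hab]
  have hcard := hstable.card_le_alpha
  rw [card_union_of_disjoint (hAY.mono_right sdiff_subset)] at hcard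
  have := card_le_card_sdiff_add_card (s := Y) (t := N)
  omega

theorem WellCovered.card_le_card_biUnion_neighborFinset (hwc : WellCovered G)
    (h : G.IsBipartiteWith ↑s ↑t) (u : Finset V) :
    #u ≤ #(u.biUnion (G.neighborFinset ·)) := by
  have hs := hwc.card_eq (h.isMaximalStable_left hwc.1)
  have ht := hwc.card_eq (h.symm.isMaximalStable_left hwc.1)
  set A := u.filter (· ∈ s)
  set B := u.filter (· ∉ s)
  have hAs : A ⊆ s := fun v hv => (mem_filter.1 hv).2
  have hBt : B ⊆ t := fun v hv => h.mem_right_of_notMem_left hwc.1 (mem_filter.1 hv).2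
  have hA := (h.isStable_left.mono hAs).card_le_card_biUnion_neighborFinset
    h.symm.isStable_left (disjoint_of_subset_left hAs (disjoint_coe.1 h.disjoint)) ht.ge
  have hB := (h.symm.isStable_left.mono hBt).card_le_card_biUnion_neighborFinset
    h.isStable_left (disjoint_of_subset_left hBt (disjoint_coe.1 h.disjoint.symm)) hs.ge
  have hdisj : Disjoint (A.biUnion (G.neighborFinset ·)) (B.biUnion (G.neighborFinset ·)) :=
    disjoint_of_subset_left (h.biUnion_neighborFinset_subset hAs)
      (disjoint_of_subset_right (h.symm.biUnion_neighborFinset_subset hBt)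
        (disjoint_coe.1 h.disjoint.symm))
  calc #u = #A + #B := (card_filter_add_card_filter_not _).symm
    _ ≤ #(A.biUnion (G.neighborFinset ·) ∪ B.biUnion (G.neighborFinset ·)) := by
      rw [card_union_of_disjoint hdisj]; omega
    _ ≤ #(u.biUnion (G.neighborFinset ·)) :=
      card_le_card (union_subset (biUnion_subset_biUnion_of_subset_left _ (filter_subset _ _))
        (biUnion_subset_biUnion_of_subset_left _ (filter_subset _ _)))

theorem WellCovered.exists_isPerfectMatching (hwc : WellCovered G) (hG : G.IsBipartite) :
    ∃ M : G.Subgraph, M.IsPerfectMatching := by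
  obtain ⟨s, t, h⟩ := hG.exists_isBipartiteWith_finset
  refine exists_isPerfectMatching_of_forall_ncard_le h fun u => ?_
  simpa [← Set.ncard_coe_finset, neighborFinset_def] using
    hwc.card_le_card_biUnion_neighborFinset h u.toFinset

end Bipartite

section Acyclic

variable {G : SimpleGraph V} {p : V → V}

theorem SimpleGraph.IsAcyclic.not_adj_of_adj_of_adj_of_adj (hG : G.IsAcyclic) {c x y d : V}
    (hcx : G.Adj c x) (hxy : G.Adj x y) (hyd : G.Adj y d) (hcy : c ≠ y) (hxd : x ≠ d) :
    ¬ G.Adj c d := by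
  intro hcd
  have := isBridge_iff_forall_walk_mem_edges.1 (isAcyclic_iff_forall_adj_isBridge.1 hG hxy)
    (.cons hcx.symm (.cons hcd (.cons hyd.symm .nil)))
  simp [hcy.symm, hxd, hcx.ne', hxy.ne] at this

theorem SimpleGraph.exists_adj_ne_of_degree_ne_one [Fintype V] {v w : V} (hvw : G.Adj v w)
    (h : G.degree v ≠ 1) : ∃ u, G.Adj v u ∧ u ≠ w := by
  by_contra! hall
  exact h (degree_eq_one_iff_existsUnique_adj.2 ⟨w, hvw, hall⟩)

theorem IsPairing.degree_eq_one_or_of_wellCovered [Fintype V] (hp : IsPairing G p)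
    (hG : G.IsAcyclic) (hwc : WellCovered G) (v : V) :
    G.degree v = 1 ∨ G.degree (p v) = 1 := by
  by_contra! hdeg
  obtain ⟨c, hvc, hcp⟩ := exists_adj_ne_of_degree_ne_one (hp.2 v) hdeg.1
  obtain ⟨d, hpd, hdv⟩ := exists_adj_ne_of_degree_ne_one (hp.2 v).symm hdeg.2
  -- as `c v (p v) d` is no 4-cycle, a maximal stable set contains `c, d`, so misses `v, p v`
  obtain ⟨S, hcdS, hS⟩ := (isStable_pair (hG.not_adj_of_adj_of_adj_of_adj hvc.symm (hp.2 v) hpd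
    hcp hdv.symm)).exists_isMaximalStable_superset
  have hv : v ∉ S ∪ S.image p := by
    rw [mem_union, mem_image, not_or, not_exists]
    refine ⟨fun hvS => hS.1 (hcdS (by simp)) hvS hvc.symm, fun u ⟨huS, hpu⟩ => ?_⟩
    rw [← hpu, hp.1 u] at hpd
    exact hS.1 huS (hcdS (by simp)) hpd
  have hlt := card_lt_univ_of_notMem hv
  rw [← hp.two_mul_card_eq hS.1, hwc.card_eq hS, ← hwc.card_eq_two_mul_alpha hG.isBipartite]
    at hlt
  exact hlt.false

theorem WellCovered.hasPendantPerfectMatching [Fintype V] (hwc : WellCovered G)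
    (hG : G.IsAcyclic) : HasPendantPerfectMatching G := by
  obtain ⟨M, hM⟩ := hwc.exists_isPerfectMatching hG.isBipartite
  obtain ⟨p, hp, -⟩ := hM.exists_isPairing
  exact hp.hasPendantPerfectMatching (hp.degree_eq_one_or_of_wellCovered hG hwc)

end Acyclic

section Square

variable {G : SimpleGraph V} {p : V → V} {S : Finset V}

theorem IsStable.of_square (hS : IsStable (square G) S) : IsStable G S :=
  fun _ ha _ hb hab => hS ha hb ⟨hab.ne, Or.inl hab⟩

theorem IsStable.disjoint_insert_neighborFinset_of_square [Fintype V]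
    (hS : IsStable (square G) S) {s s' : V} (hs : s ∈ S) (hs' : s' ∈ S) (hne : s ≠ s') :
    Disjoint (insert s (G.neighborFinset s)) (insert s' (G.neighborFinset s')) := by
  refine disjoint_left.2 fun v hv hv' => hS hs hs' ⟨hne, ?_⟩
  simp only [mem_insert, mem_neighborFinset] at hv hv'
  rcases hv with rfl | hv <;> rcases hv' with rfl | hv'
  exacts [absurd rfl hne, Or.inl hv'.symm, Or.inl hv, Or.inr ⟨v, hv, hv'.symm⟩]

theorem SimpleGraph.Connected.eq_or_eq_of_adj_of_degree_eq_one [Fintype V] (hG : G.Connected)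
    {u v : V} (huv : G.Adj u v) (hu : G.degree u = 1) (hv : G.degree v = 1) (z : V) :
    z = u ∨ z = v := by
  obtain ⟨q⟩ := hG.preconnected u z
  suffices ∀ {a b} (q : G.Walk a b), a = u ∨ a = v → b = u ∨ b = v from this q (Or.inl rfl)
  intro a b q
  induction q with
  | nil => exact id
  | cons hab _ ih =>
    rintro (rfl | rfl)
    · exact ih (Or.inr (eq_of_adj_of_degree_eq_one hu hab huv))
    · exact ih (Or.inl (eq_of_adj_of_degree_eq_one hv hab huv.symm))

variable [Fintype V]

theorem alpha_square_le : alpha (square G) ≤ alpha G := by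
  obtain ⟨S, hS, hcard⟩ := exists_isStable_card_eq_alpha (square G)
  exact hcard ▸ hS.of_square.card_le_alpha

theorem IsPairing.alpha_le_alpha_square (hp : IsPairing G p)
    (hpend : ∀ v, G.degree v = 1 ∨ G.degree (p v) = 1)
    (hleaf : ∀ v, G.degree v = 1 → G.degree (p v) ≠ 1) : alpha G ≤ alpha (square G) := by
  set L := univ.filter (G.degree · = 1)
  -- two leaves are never adjacent, and a common neighbour would be the partner of both
  have hL : IsStable (square G) L := by
    intro a ha b hb ⟨hab, hadj⟩
    simp only [L, mem_filter, mem_univ, true_and] at ha hb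
    rcases hadj with hadj | ⟨w, haw, hwb⟩
    · exact hleaf a ha (eq_of_adj_of_degree_eq_one ha hadj (hp.2 a) ▸ hb)
    · exact hab (hp.1.injective ((eq_of_adj_of_degree_eq_one ha haw (hp.2 a)).symm.trans
        (eq_of_adj_of_degree_eq_one hb hwb.symm (hp.2 b))))
  have hcover : L ∪ L.image p = univ := eq_univ_of_forall fun v => by
    rcases hpend v with h | h
    · exact mem_union_left _ (by simpa [L] using h)
    · exact mem_union_right _ (mem_image.2 ⟨p v, by simpa [L] using h, hp.1 v⟩)
  have hL2 := hp.two_mul_card_eq hL.of_square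
  rw [hcover, card_univ] at hL2
  have := hp.two_mul_alpha_le
  have := hL.card_le_alpha
  omega

theorem HasPendantPerfectMatching.squareStable (h : HasPendantPerfectMatching G)
    (hG : G.Connected) : SquareStable G := by
  obtain ⟨p, hp, hpend⟩ := h.exists_isPairing
  refine le_antisymm ?_ alpha_square_le
  by_cases hleaf : ∀ v, G.degree v = 1 → G.degree (p v) ≠ 1
  · exact hp.alpha_le_alpha_square hpend hleaf
  -- otherwise `G` is a single edge
  push Not at hleaf
  obtain ⟨v, hv, hpv⟩ := hleaf
  have hcard : Fintype.card V ≤ 2 := by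
    rw [← card_univ]
    refine (card_le_card (t := {v, p v}) fun z _ => ?_).trans card_le_two
    rcases hG.eq_or_eq_of_adj_of_degree_eq_one (hp.2 v) hv hpv z with rfl | rfl <;> simp
  have := hp.two_mul_alpha_le
  have := (isStable_singleton (G := square G) v).card_le_alpha
  rw [card_singleton] at this
  omega

theorem IsStable.existsUnique_pendantAdj_of_square (hS : IsStable (square G) S)
    (hdeg : ∀ s ∈ S, G.degree s = 1) (hcover : ∀ v ∉ S, ∃ s ∈ S, G.Adj v s) (v : V) :
    ∃! w, PendantAdj G v w := by
  by_cases hv : v ∈ S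
  · obtain ⟨w, hvw, hw⟩ := degree_eq_one_iff_existsUnique_adj.1 (hdeg v hv)
    exact ⟨w, ⟨hvw, Or.inl (hdeg v hv)⟩, fun u hu => hw u hu.1⟩
  obtain ⟨s, hs, hvs⟩ := hcover v hv
  refine ⟨s, ⟨hvs, Or.inr (hdeg s hs)⟩, fun u ⟨hvu, hu⟩ => ?_⟩
  rcases hu with hu | hu
  · exact eq_of_adj_of_degree_eq_one hu hvu hvs
  by_cases huS : u ∈ S
  · by_contra hus
    exact hS huS hs ⟨hus, Or.inr ⟨v, hvu.symm, hvs⟩⟩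
  · obtain ⟨s', hs', hus'⟩ := hcover u huS
    exact absurd (eq_of_adj_of_degree_eq_one hu hus' hvu.symm ▸ hs') hv

theorem IsStable.degree_eq_one_and_dominating_of_square (hiso : ∀ v, ∃ w, G.Adj v w)
    (hS : IsStable (square G) S) (hcard : Fintype.card V ≤ 2 * #S) :
    (∀ s ∈ S, G.degree s = 1) ∧ ∀ v ∉ S, ∃ s ∈ S, G.Adj v s := by
  -- the closed neighbourhoods `N s` are disjoint, and each has at least two vertices
  set N : V → Finset V := fun s => insert s (G.neighborFinset s)
  have hN : ∀ s, #(N s) = G.degree s + 1 := fun s => by simp [N]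
  have h2 : ∀ s ∈ S, 2 ≤ #(N s) := fun s _ => by
    have := (G.degree_pos_iff_exists_adj s).2 (hiso s)
    have := hN s
    omega
  have hsum : ∑ s ∈ S, #(N s) = #(S.biUnion N) := (card_biUnion fun s hs s' hs' hne =>
    hS.disjoint_insert_neighborFinset_of_square hs hs' hne).symm
  have hle := card_le_univ (S.biUnion N)
  have hS2 : ∑ s ∈ S, 2 = 2 * #S := by rw [sum_const, smul_eq_mul, mul_comm]
  have heq : ∑ s ∈ S, 2 = ∑ s ∈ S, #(N s) := le_antisymm (sum_le_sum h2) (by omega)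
  have hunion : S.biUnion N = univ := eq_univ_of_card _ (by omega)
  refine ⟨fun s hs => ?_, fun v hv => ?_⟩
  · have := (sum_eq_sum_iff_of_le h2).1 heq s hs
    have := hN s
    omega
  · obtain ⟨s, hs, hvs⟩ := mem_biUnion.1 (hunion ▸ mem_univ v)
    rcases mem_insert.1 hvs with rfl | hsv
    · exact absurd hs hv
    · exact ⟨s, hs, ((mem_neighborFinset _ _ _).1 hsv).symm⟩

theorem hasPendantPerfectMatching_of_card_le_two_mul_alpha_square (hiso : ∀ v, ∃ w, G.Adj v w)
    (h : Fintype.card V ≤ 2 * alpha (square G)) : HasPendantPerfectMatching G := by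
  obtain ⟨S, hS, hcard⟩ := exists_isStable_card_eq_alpha (square G)
  obtain ⟨hdeg, hdom⟩ := hS.degree_eq_one_and_dominating_of_square hiso (hcard ▸ h)
  exact hasPendantPerfectMatching_of_existsUnique (hS.existsUnique_pendantAdj_of_square hdeg hdom)

end Square

/-- For a tree of order ≥ 2: well-covered ⟺ very well-covered ⟺ perfect matching of
pendant edges ⟺ square-stable. -/
theorem stmt18 [Fintype V] (G : SimpleGraph V) (ht : G.IsTree)
    (hn : 2 ≤ Fintype.card V) :
    (WellCovered G ↔ VeryWellCovered G) ∧
    (WellCovered G ↔ HasPendantPerfectMatching G) ∧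
    (WellCovered G ↔ SquareStable G) := by
  have hiso : ∀ v, ∃ w, G.Adj v w :=
    have : Nontrivial V := Fintype.one_lt_card_iff_nontrivial.1 hn
    ht.connected.preconnected.exists_adj_of_nontrivial
  have hwc : WellCovered G ↔ HasPendantPerfectMatching G :=
    ⟨fun h => h.hasPendantPerfectMatching ht.isAcyclic, fun h => h.wellCovered⟩
  refine ⟨⟨fun h => (hwc.1 h).veryWellCovered, fun h => h.1⟩, hwc, hwc.trans ?_⟩
  refine ⟨fun h => h.squareStable ht.connected, fun h => ?_⟩
  obtain ⟨s, t, hst⟩ := ht.isBipartite.exists_isBipartiteWith_finset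
  exact hasPendantPerfectMatching_of_card_le_two_mul_alpha_square hiso
    (h ▸ hst.card_le_two_mul_alpha hiso)
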